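/- arXiv:2407.11319 — 2 statements merged into one kernel-verified Lean document; each statement's English description precedes it below -/
import Mathlib

section
/- Every binary orthogonal matrix is symplectic with respect to ω = J - I: if A ∈ 𝔽₂^{2n×2n} satisfies Aᵀ A = I, then Aᵀ ω A = ω. -/
open Matrix

/-- The complement of the identity matrix over 𝔽₂ (equals J - I). -/
def omegaMat (N : ℕ) : Matrix (Fin N) (Fin N) (ZMod 2) :=
  Matrix.of fun i j => if i = j then 0 else 1

theorem orthogonal_is_symplectic (n : ℕ) (A : Matrix (Fin (2 * n)) (Fin (2 * n)) (ZMod 2))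
    (hA : Aᵀ * A = 1) : Aᵀ * omegaMat (2 * n) * A = omegaMat (2 * n) := by
  -- column sums of A are 1
  have hcol : ∀ i, (∑ k, A k i) = 1 := by
    intro i
    have h := congrArg (fun M => M i i) hA
    simp only [Matrix.mul_apply, Matrix.one_apply_eq, Matrix.transpose_apply] at h
    have : ∀ k, A k i * A k i = A k i := by
      intro k
      have := ZMod.pow_card (A k i)
      simpa [sq] using this
    rw [← h]
    exact Finset.sum_congr rfl fun k _ => (this k).symm
  have homega : omegaMat (2 * n) = (Matrix.of fun _ _ => (1 : ZMod 2)) + 1 := by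
    ext i j
    by_cases h : i = j <;> simp [omegaMat, Matrix.one_apply, h] <;> decide
  have hJ : Aᵀ * (Matrix.of fun _ _ => (1 : ZMod 2)) * A
      = (Matrix.of fun _ _ => (1 : ZMod 2)) := by
    ext i j
    simp only [Matrix.mul_apply, Matrix.transpose_apply, Matrix.of_apply]
    calc ∑ k, (∑ l, A l i * 1) * A k j
        = ∑ k, (∑ l, A l i) * A k j := by simp
      _ = ∑ k, A k j := by rw [hcol i]; simp
      _ = 1 := hcol j
  rw [homega, Matrix.mul_add, Matrix.add_mul, hJ, Matrix.mul_one, hA]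
end

section
/- A linear map S ∈ GL(2n, 𝔽₂) that is symplectic with respect to ω = J - I preserves parity if and only if Sᵀ S = I; i.e., the parity-preserving symplectic matrices over 𝔽₂ are exactly the orthogonal matrices. -/
open Matrix

/-- A symplectic (w.r.t. ω = J - I) invertible matrix over 𝔽₂ preserves parity
iff it is orthogonal. -/
theorem symplectic_parity_preserving_iff_orthogonal (n : ℕ)
    (S : Matrix (Fin (2 * n)) (Fin (2 * n)) (ZMod 2))
    (hinv : IsUnit S) (hsymp : Sᵀ * omegaMat (2 * n) * S = omegaMat (2 * n)) :
    (∀ v : Fin (2 * n) → ZMod 2, S.mulVec v ⬝ᵥ S.mulVec v = v ⬝ᵥ v) ↔ Sᵀ * S = 1 := by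
  have mulself : ∀ x : ZMod 2, x * x = x := by decide
  have addself : ∀ x : ZMod 2, x + x = 0 := by decide
  constructor
  · intro h
    -- column sums are all 1
    have hcol : ∀ i, (∑ k, S k i) = 1 := by
      intro i
      have h1 := h (Pi.single i 1)
      simp [Matrix.mulVec_single, dotProduct, Pi.single_apply, mulself] at h1
      simpa [mulself] using h1
    ext i j
    have hs := Matrix.ext_iff.mpr hsymp i j
    have key : (Sᵀ * omegaMat (2 * n) * S) i j = 1 + (Sᵀ * S) i j := by
      simp only [Matrix.mul_apply, Matrix.transpose_apply, omegaMat, Matrix.of_apply]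
      have inner : ∀ l, (∑ k, S k i * (if k = l then 0 else 1)) = 1 + S l i := by
        intro l
        have step : (∑ k, S k i * (if k = l then 0 else 1))
            = ∑ k, (S k i + if k = l then S k i else 0) := by
          apply Finset.sum_congr rfl
          intro k _
          by_cases hk : k = l <;> simp [hk, addself]
        rw [step, Finset.sum_add_distrib, hcol, Finset.sum_ite_eq']
        simp
      calc (∑ l, (∑ k, S k i * (if k = l then 0 else 1)) * S l j)
          = ∑ l, (1 + S l i) * S l j := by
            refine Finset.sum_congr rfl fun l _ => by rw [inner]
        _ = ∑ l, (S l j + S l i * S l j) := by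
            refine Finset.sum_congr rfl fun l _ => by ring
        _ = 1 + ∑ l, S l i * S l j := by
            rw [Finset.sum_add_distrib, hcol j]
    rw [key] at hs
    have h2 : (Sᵀ * S) i j = 1 + (omegaMat (2 * n)) i j := by
      rw [← hs, ← add_assoc, addself, zero_add]
    rw [h2]
    by_cases hij : i = j <;> simp [omegaMat, Matrix.one_apply, hij] <;> decide
  · intro h v
    calc S.mulVec v ⬝ᵥ S.mulVec v
        = v ⬝ᵥ (Sᵀ * S).mulVec v := by
          rw [← Matrix.mulVec_mulVec, Matrix.dotProduct_mulVec v, Matrix.vecMul_transpose]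
      _ = v ⬝ᵥ v := by rw [h, Matrix.one_mulVec]
end
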